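/- arXiv:2402.09968 — 2 statements merged into one kernel-verified Lean document; each statement's English description precedes it below -/
import Mathlib

section
/- For m ≥ 2, the number of 4-tuples (a_1,a_2,a_3,a_4) in (Z/2^m Z)^4 with M_4(a_1,a_2,a_3,a_4) = Id equals (m+2)·2^{m-1}. -/
open Matrix

def matM {A : Type*} [CommRing A] (x : A) : Matrix (Fin 2) (Fin 2) A := !![x, -1; 1, 0]

def Mn {A : Type*} [CommRing A] {n : ℕ} (a : Fin n → A) : Matrix (Fin 2) (Fin 2) A :=
  ((List.ofFn fun i => matM (a i)).reverse).prod

theorem Mn_eq_one_iff {A : Type*} [CommRing A] (a : Fin 4 → A) :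
    Mn a = 1 ↔ a 0 * a 1 = 0 ∧ a 2 = -a 0 ∧ a 3 = -a 1 := by
  simp [Mn, List.ofFn_succ, matM, Matrix.mul_fin_two, Matrix.one_fin_two, ← Matrix.ext_iff,
    Fin.forall_fin_two, funext_iff, show (Fin.succ 2 : Fin 4) = 3 from rfl]
  constructor
  · rintro ⟨⟨h11, h12⟩, h21, h22⟩
    have h2 : a 2 = -a 0 := by linear_combination a 0 * h22 - h21
    have h3 : a 3 = -a 1 := by linear_combination h12 + a 3 * h22
    exact ⟨by linear_combination a 1 * h2 - h22, h2, h3⟩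
  · rintro ⟨h0, h2, h3⟩
    refine ⟨⟨?_, ?_⟩, ?_, ?_⟩
    · linear_combination (a 3 * a 2 - 1) * h0 - a 3 * h2
    · linear_combination h3 - a 3 * a 1 * h2 + a 3 * h0
    · linear_combination a 2 * h0 - h2
    · linear_combination a 1 * h2 - h0

lemma card_ann {n : ℕ} [NeZero n] (x : ZMod n) :
    Nat.card {y : ZMod n // x * y = 0} = Nat.gcd n x.val := by
  set φ : ZMod n →+ ZMod n := AddMonoidHom.mulLeft x with hφ
  have hrange : φ.range = AddSubgroup.zmultiples x := by
    ext y
    constructor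
    · rintro ⟨z, rfl⟩
      exact ⟨(z.val : ℤ), by
        simp [hφ, AddMonoidHom.mulLeft, zsmul_eq_mul, mul_comm, ZMod.natCast_val,
          ZMod.cast_id]⟩
    · rintro ⟨k, rfl⟩
      exact ⟨(k : ZMod n), by simp [hφ, AddMonoidHom.mulLeft, zsmul_eq_mul, mul_comm]⟩
  have h1 : Nat.card φ.range = n / Nat.gcd n x.val := by
    rw [hrange, Nat.card_zmultiples]
    conv_lhs => rw [show x = ((x.val : ℕ) : ZMod n) by simp [ZMod.natCast_val, ZMod.cast_id]]
    rw [ZMod.addOrderOf_coe _ (NeZero.ne n)]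
  have h2 : Nat.card (ZMod n) = Nat.card (ZMod n ⧸ φ.ker) * Nat.card φ.ker :=
    AddSubgroup.card_eq_card_quotient_mul_card_addSubgroup φ.ker
  have h3 : Nat.card (ZMod n ⧸ φ.ker) = Nat.card φ.range :=
    Nat.card_congr (QuotientAddGroup.quotientKerEquivRange φ).toEquiv
  have h4 : Nat.card {y : ZMod n // x * y = 0} = Nat.card φ.ker := by
    apply Nat.card_congr
    exact Equiv.subtypeEquivRight fun y => by
      simp [AddMonoidHom.mem_ker, hφ, AddMonoidHom.mulLeft]
  have hg : Nat.gcd n x.val ∣ n := Nat.gcd_dvd_left _ _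
  have hn : 0 < n := Nat.pos_of_ne_zero (NeZero.ne n)
  have hgpos : 0 < Nat.gcd n x.val := Nat.gcd_pos_of_pos_left _ hn
  rw [h3, h1, Nat.card_zmod] at h2
  rw [h4]
  have hd : 0 < n / Nat.gcd n x.val := Nat.div_pos (Nat.le_of_dvd hn hg) hgpos
  have hk : n / (n / Nat.gcd n x.val) = Nat.card φ.ker :=
    Nat.div_eq_of_eq_mul_left hd (h2.trans (mul_comm _ _))
  rw [← hk, Nat.div_div_self hg (NeZero.ne n)]

lemma sum_range_two_mul {M : Type*} [AddCommMonoid M] (f : ℕ → M) (n : ℕ) :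
    ∑ k ∈ Finset.range (2 * n), f k = ∑ k ∈ Finset.range n, (f (2 * k) + f (2 * k + 1)) := by
  induction n with
  | zero => simp
  | succ n ih =>
    rw [Finset.sum_range_succ, ← ih, Nat.mul_succ,
      show 2 * n + 2 = (2 * n + 1) + 1 from rfl, Finset.sum_range_succ, Finset.sum_range_succ]
    abel

lemma gcd_sum (m : ℕ) (hm : 1 ≤ m) :
    ∑ k ∈ Finset.range (2 ^ m), Nat.gcd (2 ^ m) k = (m + 2) * 2 ^ (m - 1) := by
  induction m with
  | zero => omega
  | succ m ih =>
    rcases Nat.eq_zero_or_pos m with rfl | hm1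
    · decide
    · obtain ⟨m', rfl⟩ := Nat.exists_eq_succ_of_ne_zero hm1.ne'
      specialize ih hm1
      rw [pow_succ, mul_comm (2 ^ (m' + 1)) 2, sum_range_two_mul]
      have h1 : ∀ k, Nat.gcd (2 * 2 ^ (m' + 1)) (2 * k) = 2 * Nat.gcd (2 ^ (m' + 1)) k :=
        fun k => Nat.gcd_mul_left 2 _ _
      have h2 : ∀ k, Nat.gcd (2 * 2 ^ (m' + 1)) (2 * k + 1) = 1 := by
        intro k
        have : Nat.Coprime 2 (2 * k + 1) := Nat.coprime_two_left.mpr ⟨k, by ring⟩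
        have := this.pow_left (m' + 2)
        rw [show 2 * 2 ^ (m' + 1) = 2 ^ (m' + 2) by ring]
        exact this
      simp only [h1, h2]
      rw [Finset.sum_add_distrib, ← Finset.mul_sum, ih, Finset.sum_const, Finset.card_range]
      simp only [Nat.succ_sub_one, Nat.succ_eq_add_one]
      ring

theorem stmt7 (m : ℕ) (hm : 2 ≤ m) :
    Nat.card {a : Fin 4 → ZMod (2 ^ m) //
      Mn a = (1 : Matrix (Fin 2) (Fin 2) (ZMod (2 ^ m)))} = (m + 2) * 2 ^ (m - 1) := by
  haveI : NeZero (2 ^ m) := ⟨by positivity⟩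
  set n := 2 ^ m with hn
  have e : {a : Fin 4 → ZMod n // Mn a = 1} ≃ {p : ZMod n × ZMod n // p.1 * p.2 = 0} :=
    { toFun := fun x => ⟨(x.1 0, x.1 1), ((Mn_eq_one_iff x.1).1 x.2).1⟩
      invFun := fun p => ⟨![p.1.1, p.1.2, -p.1.1, -p.1.2], (Mn_eq_one_iff _).2
        ⟨by simpa using p.2, by simp, by simp⟩⟩
      left_inv := fun x => by
        obtain ⟨h0, h2, h3⟩ := (Mn_eq_one_iff x.1).1 x.2
        apply Subtype.ext
        funext i
        fin_cases i <;> simp [h2, h3]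
      right_inv := fun p => Subtype.ext (by simp) }
  rw [Nat.card_congr e,
    Nat.card_congr (Equiv.subtypeProdEquivSigmaSubtype fun (a b : ZMod n) => a * b = 0),
    Nat.card_eq_fintype_card, Fintype.card_sigma]
  have h1 : ∀ x : ZMod n, Fintype.card {y : ZMod n // x * y = 0} = Nat.gcd n x.val := by
    intro x
    rw [← Nat.card_eq_fintype_card]
    exact card_ann x
  simp only [h1]
  have h2 : ∑ x : ZMod n, Nat.gcd n x.val = ∑ k ∈ Finset.range n, Nat.gcd n k := by
    refine Finset.sum_nbij' (i := fun x : ZMod n => x.val) (j := fun k : ℕ => (k : ZMod n))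
      ?_ ?_ ?_ ?_ ?_
    · intro a _; exact Finset.mem_range.mpr (ZMod.val_lt a)
    · intro a _; exact Finset.mem_univ _
    · intro a _; simp [ZMod.natCast_val, ZMod.cast_id]
    · intro a ha; exact ZMod.val_cast_of_lt (Finset.mem_range.mp ha)
    · intro a _; rfl
  rw [h2]
  exact gcd_sum m (by omega)
end

section
/- Let m ≥ 2, n ≥ 2, and ε ∈ {1,-1}. The number of (2n+1)-tuples (a_1,...,a_{2n+1}) in (Z/2^m Z)^{2n+1} with M_{2n+1}(a_1,...,a_{2n+1}) = ε·Id equals 2^{2mn-2n-2m-1}(2^{2n+3} - 8)/3. -/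
/-!
Write `K(a) = Mn a 0 0`. Since `det (Mn a) = 1`, a tuple of length `j + 2` satisfies
`Mn a = ε • 1` iff `K` of its first `j` entries is `-ε`, and then its last two entries are
determined; so we count tuples of odd length `2n - 1` with `K(a) = -ε`. Scaling the entries
alternately by a unit `c` and by `c⁻¹` multiplies `K` by `c` on tuples of odd length, so every unit
is taken as a value of `K` equally often, namely `1 / φ(2^m)` times the number of tuples with
`K(a)` a unit. Whether `K(a)` is a unit depends only on `a mod 2`, and over a finite field with `q`
elements the number `N_j` of tuples of length `j` with `K ≠ 0` satisfies `N_{j+1} + N_j = q^{j+1}`: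
for `a = (b, x)` one has `K(a) = x K(b) - K(b')` with `b'` the first `j - 1` entries, which vanishes
for exactly one `x` if `K(b) ≠ 0` and for none otherwise, as `K(b)` and `K(b')` never both vanish.
-/

open Matrix

open Finset

section Continuant

variable {R : Type*} [CommRing R]

lemma Mn_zero (a : Fin 0 → R) : Mn a = 1 := by simp [Mn]

lemma Mn_succ {j : ℕ} (a : Fin (j + 1) → R) :
    Mn a = matM (a (Fin.last j)) * Mn (Fin.init a) := by
  simp only [Mn, List.ofFn_succ', List.concat_eq_append, List.reverse_append,
    List.reverse_singleton, List.singleton_append, List.prod_cons]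
  rfl

lemma Mn_snoc {j : ℕ} (a : Fin j → R) (x : R) : Mn (Fin.snoc a x) = matM x * Mn a := by
  rw [Mn_succ, Fin.init_snoc, Fin.snoc_last]

lemma matM_mul (x : R) (P : Matrix (Fin 2) (Fin 2) R) :
    matM x * P = !![x * P 0 0 - P 1 0, x * P 0 1 - P 1 1; P 0 0, P 0 1] := by
  ext i k
  fin_cases i <;> fin_cases k <;> simp [matM, mul_apply, Fin.sum_univ_two, sub_eq_add_neg]

lemma det_Mn {j : ℕ} (a : Fin j → R) : (Mn a).det = 1 := by
  induction j with
  | zero => simp [Mn_zero]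
  | succ j ih =>
    rw [Mn_succ, det_mul, ih, mul_one]
    simp [matM, det_fin_two_of]

lemma Mn_apply_zero_zero_ne_zero_or [Nontrivial R] {j : ℕ} (a : Fin j → R) :
    Mn a 0 0 ≠ 0 ∨ Mn a 1 0 ≠ 0 := by
  by_contra! h
  simpa [det_fin_two, h.1, h.2] using det_Mn a

lemma RingHom.mapMatrix_Mn {S : Type*} [CommRing S] (f : R →+* S) {j : ℕ} (a : Fin j → R) :
    f.mapMatrix (Mn a) = Mn (f ∘ a) := by
  induction j with
  | zero => simp [Mn_zero]
  | succ j ih =>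
    have hmatM (x : R) : f.mapMatrix (matM x) = matM (f x) := by
      ext i k
      fin_cases i <;> fin_cases k <;> simp [matM]
    rw [Mn_succ, Mn_succ, map_mul, ih, hmatM]
    rfl

end Continuant

section Scaling

variable {R : Type*} [CommRing R]

def altScale (c : Rˣ) (j : ℕ) : (Fin j → R) ≃ (Fin j → R) :=
  Equiv.piCongrRight fun i => Units.mulLeft (if Even (i : ℕ) then c else c⁻¹)

lemma altScale_snoc (c : Rˣ) {j : ℕ} (a : Fin j → R) (x : R) :
    altScale c (j + 1) (Fin.snoc a x) =
      Fin.snoc (altScale c j a) ((if Even j then c else c⁻¹ : Rˣ) * x) := by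
  funext i
  refine Fin.lastCases ?_ (fun i => ?_) i <;> simp [altScale]

lemma matM_mul_mul_diagonal (c x : R) :
    matM (c * x) * diagonal ![1, c] = diagonal ![c, 1] * matM x := by
  ext i k
  fin_cases i <;> fin_cases k <;> simp [matM]

lemma matM_inv_mul_mul_diagonal (c : Rˣ) (x : R) :
    matM (↑c⁻¹ * x) * diagonal ![(c : R), 1] = diagonal ![1, (c : R)] * matM x := by
  ext i k
  fin_cases i <;> fin_cases k <;> simp [matM, mul_right_comm _ x]

lemma Mn_altScale_mul_diagonal (c : Rˣ) {j : ℕ} (a : Fin j → R) :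
    Mn (altScale c j a) * diagonal ![1, (c : R)] =
      (if Even j then diagonal ![1, (c : R)] else diagonal ![(c : R), 1]) * Mn a := by
  induction j with
  | zero => simp [Mn_zero]
  | succ j ih =>
    obtain ⟨a, x, rfl⟩ : ∃ a x, _ = Fin.snoc a x :=
      ⟨Fin.init a, a (Fin.last j), (Fin.snoc_init_self a).symm⟩
    rw [altScale_snoc, Mn_snoc, Mn_snoc, mul_assoc, ih, ← mul_assoc, ← mul_assoc]
    by_cases hj : Even j
    · simp only [hj, if_true, Nat.even_add_one, not_true_eq_false, if_false,
        matM_mul_mul_diagonal]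
    · simp only [hj, if_false, Nat.even_add_one, not_false_eq_true, if_true,
        matM_inv_mul_mul_diagonal]

lemma Mn_altScale_apply_zero_zero (c : Rˣ) {j : ℕ} (hj : Odd j) (a : Fin j → R) :
    Mn (altScale c j a) 0 0 = c * Mn a 0 0 := by
  simpa [Nat.not_even_iff_odd.mpr hj] using
    congrFun (congrFun (Mn_altScale_mul_diagonal c a) 0) 0

variable [Fintype R] [DecidableEq R]

lemma card_Mn_apply_zero_zero_eq_mul (c : Rˣ) {j : ℕ} (hj : Odd j) (u : R) :
    #{a : Fin j → R | Mn a 0 0 = c * u} = #{a : Fin j → R | Mn a 0 0 = u} := by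
  refine (card_equiv (altScale c j) fun a => ?_).symm
  simp [Mn_altScale_apply_zero_zero c hj]

lemma card_isUnit_Mn_apply_zero_zero {j : ℕ} (hj : Odd j) :
    #{a : Fin j → R | IsUnit (Mn a 0 0)} =
      Fintype.card Rˣ * #{a : Fin j → R | Mn a 0 0 = 1} := by
  rw [card_eq_sum_card_fiberwise (f := fun a => Mn a 0 0)
    (t := univ.map ⟨Units.val, Units.val_injective⟩) fun a ha => ?_, sum_map]
  swap
  · obtain ⟨u, hu⟩ := (mem_filter.mp (mem_coe.mp ha)).2
    simp [← hu]
  calc ∑ u : Rˣ, #{a ∈ {a : Fin j → R | IsUnit (Mn a 0 0)} | Mn a 0 0 = (u : R)}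
      = ∑ u : Rˣ, #{a : Fin j → R | Mn a 0 0 = u * 1} := by
        refine sum_congr rfl fun u _ => ?_
        rw [filter_filter, mul_one]
        exact congrArg card (filter_congr fun a _ => ⟨And.right, fun h => ⟨h ▸ u.isUnit, h⟩⟩)
    _ = Fintype.card Rˣ * #{a : Fin j → R | Mn a 0 0 = 1} := by
        simp only [card_Mn_apply_zero_zero_eq_mul _ hj, sum_const, card_univ, smul_eq_mul]

end Scaling

section Field

variable {k : Type*} [Field k] [Fintype k] [DecidableEq k]

lemma card_filter_snoc {α : Type*} [Fintype α] [DecidableEq α] {j : ℕ}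
    (P : (Fin (j + 1) → α) → Prop) [DecidablePred P] :
    #{a | P a} = ∑ b : Fin j → α, #{x | P (Fin.snoc b x)} := by
  simp only [card_filter]
  rw [← (Fin.snocEquiv fun _ => α).sum_comp, Fintype.sum_prod_type_right]
  rfl

lemma card_mul_sub_eq_zero (p q : k) (hpq : p ≠ 0 ∨ q ≠ 0) :
    #{x : k | x * p - q = 0} = if p = 0 then 0 else 1 := by
  split_ifs with hp
  · simp_all
  · rw [card_eq_one]
    exact ⟨q / p, by ext x; simp [sub_eq_zero, eq_div_iff hp]⟩

lemma card_Mn_apply_zero_zero_eq_zero_succ (j : ℕ) :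
    #{a : Fin (j + 1) → k | Mn a 0 0 = 0} = #{a : Fin j → k | Mn a 0 0 ≠ 0} := by
  rw [card_filter_snoc, card_filter]
  refine sum_congr rfl fun b _ => ?_
  simp only [Mn_snoc, matM_mul, of_apply, cons_val', cons_val_zero, cons_val_fin_one]
  rw [card_mul_sub_eq_zero _ _ (Mn_apply_zero_zero_ne_zero_or b)]
  split_ifs <;> simp_all

lemma card_Mn_apply_zero_zero_ne_zero_add (j : ℕ) :
    #{a : Fin (j + 1) → k | Mn a 0 0 ≠ 0} + #{a : Fin j → k | Mn a 0 0 ≠ 0} =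
      Fintype.card k ^ (j + 1) := by
  rw [← card_Mn_apply_zero_zero_eq_zero_succ j, add_comm]
  simpa using
    card_filter_add_card_filter_not (s := univ) fun a : Fin (j + 1) → k => Mn a 0 0 = 0

lemma card_Mn_apply_zero_zero_ne_zero (j : ℕ) :
    ((Fintype.card k : ℤ) + 1) * #{a : Fin j → k | Mn a 0 0 ≠ 0} =
      Fintype.card k ^ (j + 1) + (-1) ^ j := by
  induction j with
  | zero => simp [Mn_zero]
  | succ j ih =>
    have h := congrArg (Nat.cast : ℕ → ℤ) (card_Mn_apply_zero_zero_ne_zero_add (k := k) j)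
    push_cast at h
    linear_combination ((Fintype.card k : ℤ) + 1) * h - ih

end Field

lemma AddMonoidHom.card_filter_comp_mul {G H : Type*} [AddGroup G] [AddGroup H] [Fintype G]
    [Fintype H] [DecidableEq H] (f : G →+ H) (hf : Function.Surjective f) (P : H → Prop)
    [DecidablePred P] :
    #{g | P (f g)} * Fintype.card H = Fintype.card G * #{h | P h} := by
  set c := #{g | f g = 0}
  have hfiber (h : H) : #{g | f g = h} = c :=
    AddMonoidHom.card_fiber_eq_of_mem_range f (hf h) (hf 0)
  have hP : #{g | P (f g)} = #{h | P h} * c := by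
    rw [card_eq_sum_card_fiberwise (f := f) (t := {h | P h}) fun g hg => by simpa using hg,
      sum_congr rfl fun h hh => ?_, sum_const, smul_eq_mul]
    rw [filter_filter, ← hfiber h]
    refine congrArg card (filter_congr fun g _ => ⟨And.right, fun hg => ⟨?_, hg⟩⟩)
    simpa [hg] using hh
  have hG : Fintype.card G = Fintype.card H * c := by
    rw [← card_univ, card_eq_sum_card_fiberwise (f := f) (t := univ) fun _ _ => mem_univ _]
    simp [hfiber]
  rw [hP, hG]
  ring

lemma card_isUnit_Mn_apply_zero_zero_mul {R k : Type*} [CommRing R] [Fintype R] [DecidableEq R]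
    [CommRing k] [Fintype k] [DecidableEq k] (π : R →+* k) (hπ : Function.Surjective π)
    (hunit : ∀ r, IsUnit r ↔ π r ≠ 0) (j : ℕ) :
    #{a : Fin j → R | IsUnit (Mn a 0 0)} * Fintype.card k ^ j =
      Fintype.card R ^ j * #{b : Fin j → k | Mn b 0 0 ≠ 0} := by
  have hreduce (a : Fin j → R) : IsUnit (Mn a 0 0) ↔ Mn (π ∘ a) 0 0 ≠ 0 := by
    rw [hunit, ← RingHom.mapMatrix_Mn]
    rfl
  simp_rw [hreduce]
  have h := (π.toAddMonoidHom.compLeft (Fin j)).card_filter_comp_mul hπ.comp_left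
    fun b : Fin j → k => Mn b 0 0 ≠ 0
  simp only [Fintype.card_fun, Fintype.card_fin] at h
  exact h

lemma ZMod.isUnit_iff_castHom_ne_zero {p : ℕ} [hp : Fact p.Prime] {m : ℕ} (hm : m ≠ 0)
    (r : ZMod (p ^ m)) : IsUnit r ↔ ZMod.castHom (dvd_pow_self p hm) (ZMod p) r ≠ 0 := by
  have : NeZero (p ^ m) := ⟨pow_ne_zero _ hp.out.ne_zero⟩
  rw [← ZMod.natCast_zmod_val r, ZMod.isUnit_iff_coprime, map_natCast, Ne,
    ZMod.natCast_eq_zero_iff, Nat.coprime_pow_right_iff (Nat.pos_of_ne_zero hm),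
    Nat.coprime_comm, hp.out.coprime_iff_not_dvd]

lemma ZMod.card_Mn_apply_zero_zero_eq_one (p : ℕ) [Fact p.Prime] (m n : ℕ) :
    ((p : ℚ) ^ 2 - 1) * #{a : Fin (2 * n + 1) → ZMod (p ^ (m + 1)) | Mn a 0 0 = 1} =
      p ^ (2 * m * n) * (p ^ (2 * n + 2) - 1) := by
  have hodd : Odd (2 * n + 1) := odd_two_mul_add_one n
  have hunits := card_isUnit_Mn_apply_zero_zero (R := ZMod (p ^ (m + 1))) hodd
  rw [ZMod.card_units_eq_totient, Nat.totient_prime_pow_succ Fact.out] at hunits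
  have hreduce := card_isUnit_Mn_apply_zero_zero_mul _ (ZMod.castHom_surjective _)
    (ZMod.isUnit_iff_castHom_ne_zero (p := p) m.succ_ne_zero) (2 * n + 1)
  have hfield := card_Mn_apply_zero_zero_ne_zero (k := ZMod p) (2 * n + 1)
  simp only [ZMod.card, hodd.neg_one_pow] at hreduce hfield
  have hU := congrArg (Nat.cast : ℕ → ℚ) hunits
  have hR := congrArg (Nat.cast : ℕ → ℚ) hreduce
  have hF := congrArg (Int.cast : ℤ → ℚ) hfield
  push_cast [Nat.cast_sub (Fact.out : p.Prime).one_le, Nat.succ_eq_add_one] at hU hR hF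
  have hp : (p : ℚ) ≠ 0 := by exact_mod_cast (Fact.out : p.Prime).ne_zero
  refine mul_right_cancel₀ (b := (p : ℚ) ^ m * p ^ (2 * n + 1))
    (mul_ne_zero (pow_ne_zero _ hp) (pow_ne_zero _ hp)) ?_
  linear_combination (-((p : ℚ) + 1) * p ^ (2 * n + 1)) * hU + ((p : ℚ) + 1) * hR +
    ((p : ℚ) ^ (m + 1)) ^ (2 * n + 1) * hF

section Closing

variable {R : Type*} [CommRing R]

lemma matM_mul_matM_mul_eq_smul_one_iff {ε : R} (hε : ε * ε = 1)
    {P : Matrix (Fin 2) (Fin 2) R} (hP : P.det = 1) (x y : R) :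
    matM y * (matM x * P) = ε • 1 ↔ P 0 0 = -ε ∧ x = -ε * P 1 0 ∧ y = ε * P 0 1 := by
  rw [det_fin_two] at hP
  rw [matM_mul, matM_mul, ← Matrix.ext_iff]
  simp only [Fin.isValue, of_apply, cons_val', cons_val_zero, cons_val_fin_one, cons_val_one,
    Matrix.smul_apply, smul_eq_mul, Fin.forall_fin_two, one_apply_eq, mul_one, ne_eq,
    zero_ne_one, not_false_eq_true, one_apply_ne, mul_zero, one_ne_zero, neg_mul]
  constructor
  · rintro ⟨⟨E1, E2⟩, E3, E4⟩
    have hp : P 0 0 = -ε := by linear_combination y * E3 - E1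
    refine ⟨hp, ?_, ?_⟩
    · linear_combination (-ε) * E3 + ε * x * hp - x * hε
    · linear_combination ε * E2 - ε * y * E4 - y * hε
  · rintro ⟨hp, rfl, rfl⟩
    refine ⟨⟨?_, ?_⟩, ?_, ?_⟩
    · linear_combination (-ε * ε * P 0 1 * P 1 0 - 1) * hp + ε * P 0 1 * P 1 0 * hε
    · linear_combination P 0 1 * hP - P 0 1 * P 1 1 * hp - P 0 1 ^ 2 * P 1 0 * hε
    · linear_combination (-ε * P 1 0) * hp + P 1 0 * hε
    · linear_combination ε * hP - ε * P 1 1 * hp + P 1 1 * hε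

lemma Mn_eq_smul_one_iff {ε : R} (hε : ε * ε = 1) {j : ℕ} (a : Fin (j + 2) → R) :
    Mn a = ε • 1 ↔ Mn (Fin.init (Fin.init a)) 0 0 = -ε ∧
      Fin.init a (Fin.last j) = -ε * Mn (Fin.init (Fin.init a)) 1 0 ∧
      a (Fin.last (j + 1)) = ε * Mn (Fin.init (Fin.init a)) 0 1 := by
  rw [Mn_succ, Mn_succ]
  exact matM_mul_matM_mul_eq_smul_one_iff hε (det_Mn _) _ _

lemma natCard_Mn_eq_smul_one {ε : R} (hε : ε * ε = 1) (j : ℕ) :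
    Nat.card {a : Fin (j + 2) → R // Mn a = ε • 1} =
      Nat.card {b : Fin j → R // Mn b 0 0 = -ε} :=
  Nat.card_congr
    { toFun a := ⟨Fin.init (Fin.init a.1), ((Mn_eq_smul_one_iff hε a.1).1 a.2).1⟩
      invFun b := ⟨Fin.snoc (Fin.snoc b.1 (-ε * Mn b.1 1 0)) (ε * Mn b.1 0 1),
        (Mn_eq_smul_one_iff hε _).2 (by simp [Fin.init_snoc, b.2])⟩
      left_inv a := by
        obtain ⟨-, hx, hy⟩ := (Mn_eq_smul_one_iff hε a.1).1 a.2
        ext1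
        simp only
        rw [← hx, ← hy, Fin.snoc_init_self, Fin.snoc_init_self]
      right_inv b := by
        ext1
        simp [Fin.init_snoc] }

end Closing

theorem stmt16 (m : ℕ) (hm : 2 ≤ m) (n : ℕ) (hn : 2 ≤ n)
    (ε : ZMod (2 ^ m)) (hε : ε = 1 ∨ ε = -1) :
    (Nat.card {a : Fin (2 * n + 1) → ZMod (2 ^ m) //
        Mn a = ε • (1 : Matrix (Fin 2) (Fin 2) (ZMod (2 ^ m)))} : ℚ) =
      2 ^ (2 * (m : ℤ) * n - 2 * n - 2 * m - 1) * (2 ^ (2 * n + 3) - 8) / 3 := by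
  obtain ⟨m, rfl⟩ : ∃ m', m = m' + 1 := ⟨m - 1, by omega⟩
  obtain ⟨n, rfl⟩ : ∃ n', n = n' + 1 := ⟨n - 1, by omega⟩
  have : Fact (Nat.Prime 2) := ⟨Nat.prime_two⟩
  have hεε : ε * ε = 1 := by rcases hε with rfl | rfl <;> simp
  have hunit : IsUnit (-ε) := (IsUnit.of_mul_eq_one ε hεε).neg
  rw [show 2 * (n + 1) + 1 = 2 * n + 1 + 2 by ring, natCard_Mn_eq_smul_one hεε,
    Nat.card_eq_fintype_card, Fintype.card_subtype, ← mul_one (-ε),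
    ← hunit.unit_spec, card_Mn_apply_zero_zero_eq_mul _ (odd_two_mul_add_one n)]
  have hcount := ZMod.card_Mn_apply_zero_zero_eq_one 2 m n
  have hexp : (2 : ℚ) ^ (2 * ((m + 1 : ℕ) : ℤ) * ((n + 1 : ℕ) : ℤ) - 2 * ((n + 1 : ℕ) : ℤ)
      - 2 * ((m + 1 : ℕ) : ℤ) - 1) = 2 ^ (2 * m * n) / 8 := by
    rw [show 2 * ((m + 1 : ℕ) : ℤ) * ((n + 1 : ℕ) : ℤ) - 2 * ((n + 1 : ℕ) : ℤ)
      - 2 * ((m + 1 : ℕ) : ℤ) - 1 = ((2 * m * n : ℕ) : ℤ) - 3 by push_cast; ring,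
      zpow_sub₀ two_ne_zero, zpow_natCast]
    norm_num
  rw [hexp, eq_div_iff three_ne_zero]
  push_cast at hcount
  linear_combination hcount
end
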